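/- Let (E,{·,·}) be a coisotropic vector bundle. The relation on the set of coisotropic sections of (E,{·,·}) defined by μ ∼_H ν if and only if there exists a Hamiltonian homotopy from μ to ν is an equivalence relation (it is reflexive, symmetric and transitive). -/

import Mathlib

open Set
open scoped Manifold Bundle

/-- A Poisson bracket on a smooth manifold `M` modelled on `I`: an ℝ-bilinear,
antisymmetric bracket on smooth real-valued functions satisfying the Jacobi identity
and the Leibniz rule. -/
structure PoissonBracket {EM : Type*} [NormedAddCommGroup EM] [NormedSpace ℝ EM]
    {HM : Type*} [TopologicalSpace HM] (I : ModelWithCorners ℝ EM HM)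
    (M : Type*) [TopologicalSpace M] [ChartedSpace HM M] where
  bracket : (M → ℝ) → (M → ℝ) → M → ℝ
  smooth_bracket : ∀ f g : M → ℝ, ContMDiff I 𝓘(ℝ, ℝ) (⊤ : ℕ∞) f → ContMDiff I 𝓘(ℝ, ℝ) (⊤ : ℕ∞) g →
    ContMDiff I 𝓘(ℝ, ℝ) (⊤ : ℕ∞) (bracket f g)
  add_left : ∀ f g h : M → ℝ, ContMDiff I 𝓘(ℝ, ℝ) (⊤ : ℕ∞) f → ContMDiff I 𝓘(ℝ, ℝ) (⊤ : ℕ∞) g →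
    ContMDiff I 𝓘(ℝ, ℝ) (⊤ : ℕ∞) h → bracket (f + g) h = bracket f h + bracket g h
  smul_left : ∀ (c : ℝ) (f g : M → ℝ), ContMDiff I 𝓘(ℝ, ℝ) (⊤ : ℕ∞) f → ContMDiff I 𝓘(ℝ, ℝ) (⊤ : ℕ∞) g →
    bracket (c • f) g = c • bracket f g
  antisymm : ∀ f g : M → ℝ, ContMDiff I 𝓘(ℝ, ℝ) (⊤ : ℕ∞) f → ContMDiff I 𝓘(ℝ, ℝ) (⊤ : ℕ∞) g →
    bracket f g = -bracket g f
  jacobi : ∀ f g h : M → ℝ, ContMDiff I 𝓘(ℝ, ℝ) (⊤ : ℕ∞) f → ContMDiff I 𝓘(ℝ, ℝ) (⊤ : ℕ∞) g →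
    ContMDiff I 𝓘(ℝ, ℝ) (⊤ : ℕ∞) h →
    bracket f (bracket g h) + bracket g (bracket h f) + bracket h (bracket f g) = 0
  leibniz : ∀ f g h : M → ℝ, ContMDiff I 𝓘(ℝ, ℝ) (⊤ : ℕ∞) f → ContMDiff I 𝓘(ℝ, ℝ) (⊤ : ℕ∞) g →
    ContMDiff I 𝓘(ℝ, ℝ) (⊤ : ℕ∞) h → bracket f (g * h) = bracket f g * h + g * bracket f h

/-- A smooth one-parameter family of Hamiltonian diffeomorphisms of the Poisson
manifold `(M, P)`: a smooth map `φ : M × [0,1] → M` (written `toFun t x`) such that each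
`φ_t`, `t ∈ [0,1]`, is a diffeomorphism (with inverse `invFun t`), `φ_0 = id`, generated
by a smooth function `F : M × [0,1] → ℝ` in the sense that
`d/dt|_{t=s} f (φ_t x) = {F_s, f} (φ_s x)` for every smooth `f : M → ℝ`. -/
structure HamiltonianFamily {EM : Type*} [NormedAddCommGroup EM] [NormedSpace ℝ EM]
    {HM : Type*} [TopologicalSpace HM] {I : ModelWithCorners ℝ EM HM}
    {M : Type*} [TopologicalSpace M] [ChartedSpace HM M]
    (P : PoissonBracket I M) where
  toFun : ℝ → M → M
  invFun : ℝ → M → M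
  smooth_toFun : ContMDiffOn (I.prod 𝓘(ℝ, ℝ)) I (⊤ : ℕ∞) (fun p : M × ℝ => toFun p.2 p.1)
    (univ ×ˢ Icc 0 1)
  smooth_each : ∀ t ∈ Icc (0:ℝ) 1, ContMDiff I I (⊤ : ℕ∞) (toFun t)
  smooth_inv : ∀ t ∈ Icc (0:ℝ) 1, ContMDiff I I (⊤ : ℕ∞) (invFun t)
  left_inv : ∀ t ∈ Icc (0:ℝ) 1, Function.LeftInverse (invFun t) (toFun t)
  right_inv : ∀ t ∈ Icc (0:ℝ) 1, Function.RightInverse (invFun t) (toFun t)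
  init : toFun 0 = id
  F : ℝ → M → ℝ
  smooth_F : ContMDiffOn (I.prod 𝓘(ℝ, ℝ)) 𝓘(ℝ, ℝ) (⊤ : ℕ∞) (fun p : M × ℝ => F p.2 p.1)
    (univ ×ˢ Icc 0 1)
  deriv_eq : ∀ f : M → ℝ, ContMDiff I 𝓘(ℝ, ℝ) (⊤ : ℕ∞) f → ∀ x : M, ∀ s ∈ Icc (0:ℝ) 1,
    HasDerivWithinAt (fun t => f (toFun t x)) (P.bracket (F s) f (toFun s x)) (Icc 0 1) s

section Bundle

variable {EB : Type*} [NormedAddCommGroup EB] [NormedSpace ℝ EB] [FiniteDimensional ℝ EB]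
  {HB : Type*} [TopologicalSpace HB] {IB : ModelWithCorners ℝ EB HB}
  {S : Type*} [TopologicalSpace S] [ChartedSpace HB S] [IsManifold IB (⊤ : ℕ∞) S]
  {F : Type*} [NormedAddCommGroup F] [NormedSpace ℝ F] [FiniteDimensional ℝ F]
  {V : S → Type*} [∀ x, AddCommGroup (V x)] [∀ x, Module ℝ (V x)]
  [∀ x, TopologicalSpace (V x)] [TopologicalSpace (Bundle.TotalSpace F V)]
  [FiberBundle F V] [VectorBundle ℝ F V] [ContMDiffVectorBundle (⊤ : ℕ∞) F V IB]

variable (F) in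
/-- The graph of a section `μ` of the bundle, as a subset of the total space. -/
def secGraph (μ : ∀ x, V x) : Set (Bundle.TotalSpace F V) :=
  Set.range fun x => Bundle.TotalSpace.mk' F x (μ x)

variable (IB F) in
/-- A section of the bundle is smooth if the induced map into the total space is. -/
def IsSmoothSection (μ : ∀ x, V x) : Prop :=
  ContMDiff IB (IB.prod 𝓘(ℝ, F)) (⊤ : ℕ∞) fun x => Bundle.TotalSpace.mk' F x (μ x)

/-- A subset `C` of the total space of the Poisson manifold given by the bundle is
coisotropic if its vanishing ideal is closed under the Poisson bracket. -/
def IsCoisotropic (P : PoissonBracket (IB.prod 𝓘(ℝ, F)) (Bundle.TotalSpace F V))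
    (C : Set (Bundle.TotalSpace F V)) : Prop :=
  ∀ f g : Bundle.TotalSpace F V → ℝ,
    ContMDiff (IB.prod 𝓘(ℝ, F)) 𝓘(ℝ, ℝ) (⊤ : ℕ∞) f → ContMDiff (IB.prod 𝓘(ℝ, F)) 𝓘(ℝ, ℝ) (⊤ : ℕ∞) g →
    (∀ p ∈ C, f p = 0) → (∀ p ∈ C, g p = 0) → ∀ p ∈ C, P.bracket f g p = 0

/-- `(E, Π)` is a coisotropic vector bundle: the zero section is coisotropic. -/
def IsCoisotropicVectorBundle
    (P : PoissonBracket (IB.prod 𝓘(ℝ, F)) (Bundle.TotalSpace F V)) : Prop :=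
  IsCoisotropic P (secGraph F fun x => (0 : V x))

/-- A Hamiltonian homotopy from the section `μ0` to the section `μ1`: a smooth family of
sections `sec : S × [0,1] → E` from `μ0` to `μ1`, together with a smooth one-parameter
family of Hamiltonian diffeomorphisms of the total space moving the graph of `μ0` to the
graph of `sec t` for each `t ∈ [0,1]`. -/
structure HamiltonianHomotopy (P : PoissonBracket (IB.prod 𝓘(ℝ, F)) (Bundle.TotalSpace F V))
    (μ0 μ1 : ∀ x, V x) where
  sec : ℝ → ∀ x, V x
  smooth_sec : ContMDiffOn (IB.prod 𝓘(ℝ, ℝ)) (IB.prod 𝓘(ℝ, F)) (⊤ : ℕ∞)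
    (fun p : S × ℝ => Bundle.TotalSpace.mk' F p.1 (sec p.2 p.1)) (univ ×ˢ Icc 0 1)
  ham : HamiltonianFamily P
  sec_zero : sec 0 = μ0
  sec_one : sec 1 = μ1
  graph_eq : ∀ t ∈ Icc (0:ℝ) 1, ham.toFun t '' secGraph F μ0 = secGraph F (sec t)

end Bundle

/-!
The constant homotopy generated by `F = 0` gives reflexivity. Running a homotopy backwards,
`t ↦ φ_{1-t} ∘ φ_1⁻¹` is generated by `-F_{1-t}` and moves the graph of `μ1` through the graphs
of `μ_{1-t}`, which gives symmetry. For transitivity, reparametrize both homotopies by smooth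
steps so that the first is at rest after time `1/4` and the second only moves after time `3/4`.
Then `t ↦ ψ_t ∘ φ_t` is generated by the sum of the two generators, because at every time one
of the two factors is locally constant in `t`.
-/

open Topology

section Smoothness

variable {EM : Type*} [NormedAddCommGroup EM] [NormedSpace ℝ EM]
  {HM : Type*} [TopologicalSpace HM] {I : ModelWithCorners ℝ EM HM}
  {M : Type*} [TopologicalSpace M] [ChartedSpace HM M]
  {EN : Type*} [NormedAddCommGroup EN] [NormedSpace ℝ EN]
  {HN : Type*} [TopologicalSpace HN] {J : ModelWithCorners ℝ EN HN}
  {N : Type*} [TopologicalSpace N] [ChartedSpace HN N]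

theorem ContMDiffOn.of_inter_isOpen_cover {n : WithTop ℕ∞} {f : M → N} {s u₁ u₂ : Set M}
    (h₁ : ContMDiffOn I J n f (s ∩ u₁)) (h₂ : ContMDiffOn I J n f (s ∩ u₂))
    (hu₁ : IsOpen u₁) (hu₂ : IsOpen u₂) (hs : s ⊆ u₁ ∪ u₂) : ContMDiffOn I J n f s :=
  contMDiffOn_of_locally_contMDiffOn fun _ hx =>
    (hs hx).elim (fun h => ⟨u₁, hu₁, h, h₁⟩) fun h => ⟨u₂, hu₂, h, h₂⟩

theorem ContMDiffOn.slice_Icc {g : M × ℝ → N}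
    (hg : ContMDiffOn (I.prod 𝓘(ℝ, ℝ)) J (⊤ : ℕ∞) g (univ ×ˢ Icc 0 1))
    {t : ℝ} (ht : t ∈ Icc (0 : ℝ) 1) : ContMDiff I J (⊤ : ℕ∞) fun x => g (x, t) := by
  rw [← contMDiffOn_univ]
  exact hg.comp (contMDiff_id.prodMk contMDiff_const).contMDiffOn fun _ _ => ⟨mem_univ _, ht⟩

theorem ContMDiffOn.comp_prodMap_Icc {g : M × ℝ → N}
    (hg : ContMDiffOn (I.prod 𝓘(ℝ, ℝ)) J (⊤ : ℕ∞) g (univ ×ˢ Icc 0 1))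
    {φ : M → M} (hφ : ContMDiff I I (⊤ : ℕ∞) φ) {α : ℝ → ℝ} (hα : ContDiff ℝ (⊤ : ℕ∞) α)
    (hαI : MapsTo α (Icc 0 1) (Icc 0 1)) :
    ContMDiffOn (I.prod 𝓘(ℝ, ℝ)) J (⊤ : ℕ∞) (fun p : M × ℝ => g (φ p.1, α p.2))
      (univ ×ˢ Icc 0 1) :=
  hg.comp ((hφ.comp contMDiff_fst).prodMk (hα.contMDiff.comp contMDiff_snd)).contMDiffOn
    fun _ hp => ⟨mem_univ _, hαI hp.2⟩

end Smoothness

section PoissonManifold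

variable {EM : Type*} [NormedAddCommGroup EM] [NormedSpace ℝ EM]
  {HM : Type*} [TopologicalSpace HM] {I : ModelWithCorners ℝ EM HM}
  {M : Type*} [TopologicalSpace M] [ChartedSpace HM M]

theorem PoissonBracket.bracket_zero_left (P : PoissonBracket I M) {f : M → ℝ}
    (hf : ContMDiff I 𝓘(ℝ, ℝ) (⊤ : ℕ∞) f) : P.bracket 0 f = 0 := by
  simpa using P.smul_left 0 0 f contMDiff_const hf

namespace HamiltonianFamily

variable {P : PoissonBracket I M}

def refl (P : PoissonBracket I M) : HamiltonianFamily P where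
  toFun _ := id
  invFun _ := id
  smooth_toFun := contMDiff_fst.contMDiffOn
  smooth_each _ _ := contMDiff_id
  smooth_inv _ _ := contMDiff_id
  left_inv _ _ _ := rfl
  right_inv _ _ _ := rfl
  init := rfl
  F _ := 0
  smooth_F := contMDiff_const.contMDiffOn
  deriv_eq f hf x s _ := by
    simpa [P.bracket_zero_left hf] using hasDerivWithinAt_const s (Icc (0 : ℝ) 1) (f x)

noncomputable def reparam (A : HamiltonianFamily P) {α : ℝ → ℝ}
    (hα : ContDiff ℝ (⊤ : ℕ∞) α) (hαI : MapsTo α (Icc 0 1) (Icc 0 1)) :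
    HamiltonianFamily P where
  toFun t x := A.toFun (α t) (A.invFun (α 0) x)
  invFun t x := A.toFun (α 0) (A.invFun (α t) x)
  smooth_toFun :=
    A.smooth_toFun.comp_prodMap_Icc (A.smooth_inv _ (hαI (left_mem_Icc.2 zero_le_one))) hα hαI
  smooth_each t ht :=
    (A.smooth_each _ (hαI ht)).comp (A.smooth_inv _ (hαI (left_mem_Icc.2 zero_le_one)))
  smooth_inv t ht :=
    (A.smooth_each _ (hαI (left_mem_Icc.2 zero_le_one))).comp (A.smooth_inv _ (hαI ht))
  left_inv t ht :=
    (A.left_inv _ (hαI ht)).comp (A.right_inv _ (hαI (left_mem_Icc.2 zero_le_one)))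
  right_inv t ht :=
    (A.left_inv _ (hαI (left_mem_Icc.2 zero_le_one))).comp (A.right_inv _ (hαI ht))
  init := funext (A.right_inv _ (hαI (left_mem_Icc.2 zero_le_one)))
  F t := deriv α t • A.F (α t)
  smooth_F :=
    (((contDiff_infty_iff_deriv.1 hα).2.contMDiff.comp contMDiff_snd).contMDiffOn).smul
      (A.smooth_F.comp_prodMap_Icc contMDiff_id hα hαI)
  deriv_eq f hf x s hs := by
    have hαs : HasDerivWithinAt α (deriv α s) (Icc 0 1) s :=
      ((hα.differentiable (by simp)) s).hasDerivAt.hasDerivWithinAt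
    rw [P.smul_left _ _ _ (A.smooth_F.slice_Icc (hαI hs)) hf]
    exact (A.deriv_eq f hf _ _ (hαI hs)).scomp s hαs hαI

def IsStationaryOn (A : HamiltonianFamily P) (s : Set ℝ) : Prop :=
  (∀ t ∈ s, ∀ t' ∈ s, A.toFun t = A.toFun t') ∧ ∀ t ∈ s, A.F t = 0

theorem reparam_isStationaryOn (A : HamiltonianFamily P) {α : ℝ → ℝ}
    (hα : ContDiff ℝ (⊤ : ℕ∞) α) (hαI : MapsTo α (Icc 0 1) (Icc 0 1)) {s : Set ℝ} {c : ℝ}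
    (hs : ∀ t ∈ s, α =ᶠ[𝓝 t] fun _ => c) : (A.reparam hα hαI).IsStationaryOn s := by
  refine ⟨fun t ht t' ht' => ?_, fun t ht => ?_⟩
  · show (fun x => A.toFun (α t) _) = fun x => A.toFun (α t') _
    rw [(hs t ht).eq_of_nhds, (hs t' ht').eq_of_nhds]
  · show deriv α t • A.F (α t) = 0
    rw [(hs t ht).deriv_eq, deriv_const, zero_smul]

/-- At every time one of the two factors is at rest, so the sum of the generators generates
the composite. -/
def comp (A B : HamiltonianFamily P) {a b : ℝ} (hab : a < b)
    (hA : A.IsStationaryOn (Icc a 1)) (hB : B.IsStationaryOn (Icc 0 b)) :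
    HamiltonianFamily P where
  toFun t x := B.toFun t (A.toFun t x)
  invFun t x := A.invFun t (B.invFun t x)
  smooth_toFun :=
    B.smooth_toFun.comp (A.smooth_toFun.prodMk contMDiffOn_snd) fun _ hp => ⟨mem_univ _, hp.2⟩
  smooth_each t ht := (B.smooth_each t ht).comp (A.smooth_each t ht)
  smooth_inv t ht := (A.smooth_inv t ht).comp (B.smooth_inv t ht)
  left_inv t ht := (B.left_inv t ht).comp (A.left_inv t ht)
  right_inv t ht := (B.right_inv t ht).comp (A.right_inv t ht)
  init := by rw [A.init, B.init]; rfl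
  F t := A.F t + B.F t
  smooth_F := A.smooth_F.add B.smooth_F
  deriv_eq f hf x s hs := by
    show HasDerivWithinAt (fun t => f (B.toFun t (A.toFun t x)))
      (P.bracket (A.F s + B.F s) f (B.toFun s (A.toFun s x))) (Icc 0 1) s
    rcases lt_or_ge s b with hsb | hbs
    · have hBid : ∀ t ∈ Icc (0 : ℝ) 1, t < b → B.toFun t = id := fun t ht htb =>
        (hB.1 t ⟨ht.1, htb.le⟩ 0 ⟨le_rfl, hs.1.trans hsb.le⟩).trans B.init
      rw [hB.2 s ⟨hs.1, hsb.le⟩, add_zero, hBid s hs hsb]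
      refine (A.deriv_eq f hf x s hs).congr_of_eventuallyEq ?_ (by rw [hBid s hs hsb]; rfl)
      filter_upwards [self_mem_nhdsWithin, mem_nhdsWithin_of_mem_nhds (Iio_mem_nhds hsb)]
        with t ht htb
      rw [hBid t ht htb]; rfl
    · have has : a < s := hab.trans_le hbs
      have hAfin : ∀ t ∈ Icc (0 : ℝ) 1, a < t → A.toFun t = A.toFun 1 := fun t ht hat =>
        hA.1 t ⟨hat.le, ht.2⟩ 1 ⟨has.le.trans hs.2, le_rfl⟩
      rw [hA.2 s ⟨has.le, hs.2⟩, zero_add, hAfin s hs has]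
      refine (B.deriv_eq f hf _ s hs).congr_of_eventuallyEq ?_ (by rw [hAfin s hs has])
      filter_upwards [self_mem_nhdsWithin, mem_nhdsWithin_of_mem_nhds (Ioi_mem_nhds has)]
        with t ht hat
      rw [hAfin t ht hat]

end HamiltonianFamily

end PoissonManifold

theorem secGraph_injective {S : Type*} {F : Type*} {V : S → Type*} :
    Function.Injective (secGraph F (V := V)) := by
  intro μ ν h
  funext x
  obtain ⟨y, hy⟩ : Bundle.TotalSpace.mk' F x (μ x) ∈ secGraph F ν := h ▸ mem_range_self x
  obtain rfl : y = x := congrArg Bundle.TotalSpace.proj hy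
  exact (Bundle.TotalSpace.mk_inj.1 hy).symm

section Homotopy

variable {EB : Type*} [NormedAddCommGroup EB] [NormedSpace ℝ EB]
  {HB : Type*} [TopologicalSpace HB] {IB : ModelWithCorners ℝ EB HB}
  {S : Type*} [TopologicalSpace S] [ChartedSpace HB S]
  {F : Type*} [NormedAddCommGroup F] [NormedSpace ℝ F]
  {V : S → Type*} [∀ x, TopologicalSpace (V x)] [TopologicalSpace (Bundle.TotalSpace F V)]
  [FiberBundle F V]
  {P : PoissonBracket (IB.prod 𝓘(ℝ, F)) (Bundle.TotalSpace F V)} {μ0 μ1 μ2 : ∀ x, V x}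

namespace HamiltonianHomotopy

theorem sec_eq_of_isStationaryOn (H : HamiltonianHomotopy P μ0 μ1) {s : Set ℝ}
    (hs : s ⊆ Icc 0 1) (hH : H.ham.IsStationaryOn s) {t t' : ℝ} (ht : t ∈ s) (ht' : t' ∈ s) :
    H.sec t = H.sec t' :=
  secGraph_injective <| by rw [← H.graph_eq t (hs ht), ← H.graph_eq t' (hs ht'), hH.1 t ht t' ht']

noncomputable def refl (hμ : IsSmoothSection IB F μ0) : HamiltonianHomotopy P μ0 μ0 where
  sec _ := μ0
  smooth_sec := (hμ.comp contMDiff_fst).contMDiffOn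
  ham := .refl P
  sec_zero := rfl
  sec_one := rfl
  graph_eq _ _ := image_id _

noncomputable def reparam (H : HamiltonianHomotopy P μ0 μ1) {α : ℝ → ℝ}
    (hα : ContDiff ℝ (⊤ : ℕ∞) α) (hαI : MapsTo α (Icc 0 1) (Icc 0 1)) {ν0 ν1 : ∀ x, V x}
    (h0 : H.sec (α 0) = ν0) (h1 : H.sec (α 1) = ν1) : HamiltonianHomotopy P ν0 ν1 where
  sec t := H.sec (α t)
  smooth_sec := H.smooth_sec.comp_prodMap_Icc contMDiff_id hα hαI
  ham := H.ham.reparam hα hαI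
  sec_zero := h0
  sec_one := h1
  graph_eq t ht := by
    have h0I := hαI (left_mem_Icc.2 zero_le_one)
    show (fun x => H.ham.toFun (α t) (H.ham.invFun (α 0) x)) '' _ = _
    rw [← image_image, ← h0, ← H.graph_eq _ h0I, (H.ham.left_inv _ h0I).image_image,
      H.graph_eq _ (hαI ht)]

noncomputable def symm (H : HamiltonianHomotopy P μ0 μ1) : HamiltonianHomotopy P μ1 μ0 :=
  H.reparam (α := fun t => 1 - t) (contDiff_const.sub contDiff_id)
    (fun _ ht => ⟨by linarith [ht.2], by linarith [ht.1]⟩)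
    (by rw [sub_zero, H.sec_one]) (by rw [sub_self, H.sec_zero])

/-- On `[a, b]` both `A.sec` and `B.sec` equal `μ1`, which makes the glued family smooth. -/
noncomputable def comp (A : HamiltonianHomotopy P μ0 μ1) (B : HamiltonianHomotopy P μ1 μ2)
    {a b : ℝ} (ha : 0 ≤ a) (hab : a < b) (hb : b ≤ 1) (hA : A.ham.IsStationaryOn (Icc a 1))
    (hB : B.ham.IsStationaryOn (Icc 0 b)) : HamiltonianHomotopy P μ0 μ2 where
  sec t := if t < b then A.sec t else B.sec t
  smooth_sec := by
    have hAB : ∀ t ∈ Icc (0 : ℝ) 1, a < t → t < b → A.sec t = B.sec t := fun t ht hat htb => by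
      rw [A.sec_eq_of_isStationaryOn (Icc_subset_Icc_left ha) hA ⟨hat.le, ht.2⟩
          (right_mem_Icc.2 (hab.le.trans hb)), A.sec_one,
        B.sec_eq_of_isStationaryOn (Icc_subset_Icc_right hb) hB ⟨ht.1, htb.le⟩
          (left_mem_Icc.2 (ha.trans hab.le)), B.sec_zero]
    refine ContMDiffOn.of_inter_isOpen_cover (u₁ := {p | p.2 < b}) (u₂ := {p | a < p.2})
      ((A.smooth_sec.mono inter_subset_left).congr fun p hp => ?_)
      ((B.smooth_sec.mono inter_subset_left).congr fun p hp => ?_)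
      (isOpen_lt continuous_snd continuous_const) (isOpen_lt continuous_const continuous_snd)
      fun p _ => (lt_or_ge p.2 b).imp id hab.trans_le
    · rw [if_pos (show p.2 < b from hp.2)]
    · by_cases h : p.2 < b
      · rw [if_pos h, hAB p.2 hp.1.2 hp.2 h]
      · rw [if_neg h]
  ham := A.ham.comp B.ham hab hA hB
  sec_zero := if_pos (ha.trans_lt hab) |>.trans A.sec_zero
  sec_one := (if_neg (not_lt.2 hb)).trans B.sec_one
  graph_eq t ht := by
    show (fun x => B.ham.toFun t (A.ham.toFun t x)) '' _ = _
    rw [← image_image]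
    by_cases htb : t < b
    · rw [if_pos htb, A.graph_eq t ht,
        hB.1 t ⟨ht.1, htb.le⟩ 0 (left_mem_Icc.2 (ha.trans hab.le)), B.ham.init, image_id]
    · rw [if_neg htb, hA.1 t ⟨hab.le.trans (not_lt.1 htb), ht.2⟩ 1 ⟨hab.le.trans hb, le_rfl⟩,
        A.graph_eq 1 (right_mem_Icc.2 zero_le_one), A.sec_one, B.graph_eq t ht]

noncomputable def trans (A : HamiltonianHomotopy P μ0 μ1) (B : HamiltonianHomotopy P μ1 μ2) :
    HamiltonianHomotopy P μ0 μ2 :=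
  have hI : ∀ c : ℝ → ℝ, MapsTo (fun t => Real.smoothTransition (c t)) (Icc 0 1) (Icc 0 1) :=
    fun _ _ _ => ⟨Real.smoothTransition.nonneg _, Real.smoothTransition.le_one _⟩
  have hα : ContDiff ℝ (⊤ : ℕ∞) fun t => Real.smoothTransition (4 * t) :=
    Real.smoothTransition.contDiff.comp (contDiff_const.mul contDiff_id)
  have hβ : ContDiff ℝ (⊤ : ℕ∞) fun t => Real.smoothTransition (4 * t - 3) :=
    Real.smoothTransition.contDiff.comp ((contDiff_const.mul contDiff_id).sub contDiff_const)
  (A.reparam hα (hI _) (by simp [A.sec_zero])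
      (by rw [Real.smoothTransition.one_of_one_le (by norm_num), A.sec_one])).comp
    (B.reparam hβ (hI _)
      (by rw [Real.smoothTransition.zero_of_nonpos (by norm_num), B.sec_zero])
      (by rw [Real.smoothTransition.one_of_one_le (by norm_num), B.sec_one]))
    (a := 1 / 3) (b := 2 / 3) (by norm_num) (by norm_num) (by norm_num)
    (A.ham.reparam_isStationaryOn hα (hI _) (c := 1) fun t ht => by
      filter_upwards [Ioi_mem_nhds (show 1 / 4 < t by linarith [ht.1])] with u hu
      exact Real.smoothTransition.one_of_one_le (by linarith [mem_Ioi.1 hu]))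
    (B.ham.reparam_isStationaryOn hβ (hI _) (c := 0) fun t ht => by
      filter_upwards [Iio_mem_nhds (show t < 3 / 4 by linarith [ht.2])] with u hu
      exact Real.smoothTransition.zero_of_nonpos (by linarith [mem_Iio.1 hu]))

end HamiltonianHomotopy

end Homotopy

theorem statement_5 {EB : Type*} [NormedAddCommGroup EB] [NormedSpace ℝ EB]
    {HB : Type*} [TopologicalSpace HB] {IB : ModelWithCorners ℝ EB HB}
    {S : Type*} [TopologicalSpace S] [ChartedSpace HB S]
    {F : Type*} [NormedAddCommGroup F] [NormedSpace ℝ F]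
    {V : S → Type*}
    [∀ x, TopologicalSpace (V x)] [TopologicalSpace (Bundle.TotalSpace F V)]
    [FiberBundle F V]
    (P : PoissonBracket (IB.prod 𝓘(ℝ, F)) (Bundle.TotalSpace F V)) :
    Equivalence (fun μ ν :
        {μ : ∀ x, V x // IsSmoothSection IB F μ ∧ IsCoisotropic P (secGraph F μ)} =>
      Nonempty (HamiltonianHomotopy P μ.1 ν.1)) :=
  ⟨fun μ => ⟨.refl μ.2.1⟩, fun ⟨H⟩ => ⟨H.symm⟩, fun ⟨H⟩ ⟨K⟩ => ⟨H.trans K⟩⟩
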